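/- arXiv:2502.07135 — 6 statements merged into one kernel-verified Lean document; each statement's English description precedes it below -/
import Mathlib

section
/- Let k ≥ 4 be an even integer, let d ≥ k²/2 be an integer, and let n ≥ k be a multiple of k/2. Then there exists a formula Φ ∈ Φ_{n,k,d} such that the all-TRUE assignment σ⁺ satisfies Φ and, for every real β ≥ k·ln 2, the weighted k-SAT distribution satisfies Pr_{Φ,β}[σ = σ⁺] ≥ 1/(1 + 2^{-n}). (Symmetrically, there exists Φ' ∈ Φ_{n,k,d} such that the all-FALSE assignment carries probability at least 1/(1+2^{-n}) under Pr_{Φ',β} for every β ≤ -k·ln 2.) -/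
open Real Finset

attribute [local instance] Classical.propDecidable

abbrev Assignment (n : ℕ) := Fin n → Bool
abbrev Clause (n : ℕ) := Fin n → Option Bool
abbrev Cnf (n : ℕ) := List (Clause n)

/-- A clause is satisfied if it contains a true literal. -/
def clauseSat {n : ℕ} (σ : Assignment n) (c : Clause n) : Prop :=
  ∃ i : Fin n, c i = some (σ i)

/-- An assignment satisfies a CNF formula if every clause contains a true literal. -/
def satCnf {n : ℕ} (σ : Assignment n) (Φ : Cnf n) : Prop :=
  ∀ c ∈ Φ, clauseSat σ c

/-- The set of variables appearing (negated or not) in a clause. -/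
noncomputable def clauseVars {n : ℕ} (c : Clause n) : Finset (Fin n) :=
  Finset.univ.filter (fun i => (c i).isSome)

/-- The number of clauses of `Φ` in which variable `i` appears (negated or not). -/
noncomputable def degree {n : ℕ} (Φ : Cnf n) (i : Fin n) : ℕ :=
  (Φ.filter (fun c => (c i).isSome)).length

/-- `Φ ∈ Φ_{n,k,d}`: every clause has exactly `k` distinct variables and every
variable appears in at most `d` clauses. -/
def memPhi (n k d : ℕ) (Φ : Cnf n) : Prop :=
  (∀ c ∈ Φ, (clauseVars c).card = k) ∧ ∀ i : Fin n, degree Φ i ≤ d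

/-- The number of variables assigned TRUE. -/
noncomputable def mTrue {n : ℕ} (σ : Assignment n) : ℕ :=
  (Finset.univ.filter (fun i => σ i = true)).card

/-- The number of variables assigned FALSE. -/
noncomputable def nFalse {n : ℕ} (σ : Assignment n) : ℕ :=
  (Finset.univ.filter (fun i => σ i = false)).card

/-- The (unnormalised) weight `e^{β·m(σ)}·𝟙[σ ⊨ Φ]`. -/
noncomputable def weight {n : ℕ} (β : ℝ) (Φ : Cnf n) (σ : Assignment n) : ℝ :=
  if satCnf σ Φ then Real.exp (β * mTrue σ) else 0

/-- The partition function. -/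
noncomputable def Zfun {n : ℕ} (β : ℝ) (Φ : Cnf n) : ℝ :=
  ∑ τ : Assignment n, weight β Φ τ

/-- The weighted k-SAT probability of a single assignment. -/
noncomputable def prob {n : ℕ} (β : ℝ) (Φ : Cnf n) (σ : Assignment n) : ℝ :=
  weight β Φ σ / Zfun β Φ

/-- The weighted k-SAT probability of an event. -/
noncomputable def probEvent {n : ℕ} (β : ℝ) (Φ : Cnf n) (E : Assignment n → Prop) : ℝ :=
  (∑ τ : Assignment n, if E τ then weight β Φ τ else 0) / Zfun β Φ

/-!
The variables sit on the cycle `Fin n`. For `j < m` and every `x`, `chainFormula n k m` contains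
the clause `x ∨ ⋁ ¬(x + i)` over `1 ≤ i ≤ k`, `i ≠ k - j`; the all-TRUE assignment satisfies it.
In any other satisfying assignment, let `gap σ x` be the distance from a false variable `x` to the
next false one. The clause with `j = 0` gives `gap σ x ≤ k - 1`, and if `gap σ x > k / 2`, the
clause with `j = k - gap σ x` skips exactly the next false variable and so bounds the following gap
by `k - gap σ x`. Long gaps are paid for by short successors, so the gaps, which cover the cycle,
average at most `k / 2`: there are at least `2n / k` false variables. (For `n = k` only `j = 0` is
available; it forces two false variables.) For `β ≥ k log 2` each false variable costs a factor
`2⁻ᵏ`, so the at most `2ⁿ` other satisfying assignments weigh at most `2⁻ⁿ` times the all-TRUE one.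
Negating every literal exchanges the all-TRUE and all-FALSE assignments and `β` with `-β`.
-/

open scoped Fin.CommRing

namespace KSat

theorem sum_le_mul_card_of_add_le {ι : Type*} {s : Finset ι} {e : ι → ι}
    (hmaps : Set.MapsTo e s s) (hinj : Set.InjOn e s) {g : ι → ℕ} {c : ℕ}
    (h : ∀ x ∈ s, c < g x → g x + g (e x) ≤ 2 * c) :
    ∑ x ∈ s, g x ≤ c * #s := by
  have hbij : Set.BijOn e s s := (s.finite_toSet.injOn_iff_bijOn_of_mapsTo hmaps).1 hinj
  have hperm : ∀ f : ι → ℕ, ∑ x ∈ s, f (e x) = ∑ x ∈ s, f x := fun f =>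
    sum_nbij e hmaps hinj hbij.surjOn fun _ _ => rfl
  have hpair : ∀ x ∈ s, g (e x) + (g x - c) ≤ c + (g (e x) - c) := by
    intro x hx
    by_cases hc : c < g x
    · have := h x hx hc; omega
    · omega
  have := sum_le_sum hpair
  rw [sum_add_distrib, sum_add_distrib, hperm g, hperm (g · - c), sum_const, smul_eq_mul] at this
  linarith

section Gap

variable {n : ℕ} [NeZero n] (σ : Fin n → Bool)

/-- Cyclic distance from `x` to the next variable set to `false` (`0` if there is none). -/
noncomputable def gap (x : Fin n) : ℕ :=
  sInf {d : ℕ | 0 < d ∧ σ (x + d) = false}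

variable {σ}

theorem gap_pos_and_false {x : Fin n} (hx : σ x = false) :
    0 < gap σ x ∧ σ (x + gap σ x) = false :=
  Nat.sInf_mem (s := {d : ℕ | 0 < d ∧ σ (x + d) = false})
    ⟨n, Nat.pos_of_neZero n, by simpa using hx⟩

theorem gap_le {x : Fin n} {d : ℕ} (hd : 0 < d) (h : σ (x + d) = false) : gap σ x ≤ d :=
  Nat.sInf_le ⟨hd, h⟩

theorem eq_true_of_lt_gap {x : Fin n} {t : ℕ} (ht : 0 < t) (htg : t < gap σ x) :
    σ (x + t) = true := by
  by_contra h
  exact Nat.notMem_of_lt_sInf htg ⟨ht, by simpa using h⟩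

theorem add_gap_injOn : Set.InjOn (fun x => x + gap σ x) {x | σ x = false} := by
  suffices key : ∀ x y : Fin n, σ x = false → x + gap σ x = y + gap σ y →
      gap σ x ≤ gap σ y → x = y by
    intro x hx y hy hxy
    rcases le_total (gap σ x) (gap σ y) with h | h
    · exact key x y hx hxy h
    · exact (key y x hy hxy.symm h).symm
  intro x y hx hxy hle
  obtain hlt | heq := hle.lt_or_eq
  · -- walking back `gap σ y - gap σ x` steps from `y` lands on the false variable `x`
    have hback : y + ((gap σ y - gap σ x : ℕ) : Fin n) = x := by
      push_cast [Nat.cast_sub hle]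
      linear_combination hxy.symm
    have := eq_true_of_lt_gap (σ := σ) (Nat.sub_pos_of_lt hlt)
      (Nat.sub_lt ((Nat.zero_le _).trans_lt hlt) (gap_pos_and_false hx).1)
    rw [hback, hx] at this
    exact absurd this Bool.false_ne_true
  · rw [heq] at hxy
    exact add_right_cancel hxy

theorem exists_eq_add_of_lt_gap (hne : ∃ y, σ y = false) (p : Fin n) :
    ∃ x, σ x = false ∧ ∃ t < gap σ x, x + t = p := by
  obtain ⟨y, hy⟩ := hne
  set S := {s : ℕ | σ (p - s) = false}
  have hS : (p - y).val ∈ S := by simpa [S] using hy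
  obtain hmem : sInf S ∈ S := Nat.sInf_mem ⟨_, hS⟩
  refine ⟨p - sInf S, hmem, sInf S, ?_, by ring⟩
  by_contra! hle
  obtain ⟨hpos, hfalse⟩ := gap_pos_and_false hmem
  refine Nat.notMem_of_lt_sInf (Nat.sub_lt_self hpos hle) (?_ : sInf S - gap σ (p - sInf S) ∈ S)
  simpa [S, Nat.cast_sub hle, sub_sub_eq_add_sub, sub_add] using hfalse

theorem card_le_sum_gap (hne : ∃ y, σ y = false) :
    n ≤ ∑ x ∈ univ.filter (σ · = false), gap σ x := by
  have hcover : (univ : Finset (Fin n)) ⊆ (univ.filter (σ · = false)).biUnion fun x =>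
      (range (gap σ x)).image fun t : ℕ => x + (t : Fin n) := by
    intro p _
    obtain ⟨x, hx, t, ht, rfl⟩ := exists_eq_add_of_lt_gap hne p
    simp only [mem_biUnion, mem_filter, mem_univ, true_and, mem_image, mem_range]
    exact ⟨x, hx, t, ht, rfl⟩
  calc n = #(univ : Finset (Fin n)) := by simp
    _ ≤ _ := card_le_card hcover
    _ ≤ _ := card_biUnion_le
    _ ≤ _ := sum_le_sum fun x _ => card_image_le.trans (card_range _).le

end Gap

section Clauses

variable {n : ℕ} [NeZero n]

noncomputable def shiftClause (O : Finset ℕ) (x : Fin n) : Clause n := fun p =>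
  if p = x then some true else if ∃ i ∈ O, p = x + i then some false else none

noncomputable def shiftFamily (O : Finset ℕ) : Cnf n :=
  (List.finRange n).map (shiftClause O)

theorem clauseSat_true_shiftClause (O : Finset ℕ) (x : Fin n) :
    clauseSat (fun _ => true) (shiftClause O x) :=
  ⟨x, by simp [shiftClause]⟩

theorem exists_add_eq_false_of_clauseSat {σ : Assignment n} {O : Finset ℕ} {x : Fin n}
    (hx : σ x = false) (h : clauseSat σ (shiftClause O x)) : ∃ i ∈ O, σ (x + i) = false := by
  obtain ⟨p, hp⟩ := h
  unfold shiftClause at hp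
  split_ifs at hp with hpx hO
  · simp [hpx, hx] at hp
  · obtain ⟨i, hi, rfl⟩ := hO
    exact ⟨i, hi, (Option.some_injective _ hp).symm⟩

theorem isSome_shiftClause_iff {O : Finset ℕ} {x p : Fin n} :
    (shiftClause O x p).isSome ↔ ∃ i ∈ insert 0 O, p = x + i := by
  unfold shiftClause
  split_ifs with hpx hO
  · simp [hpx]
  · simpa [hpx] using hO
  · simp_all

theorem card_clauseVars_shiftClause {O : Finset ℕ} (hO : ∀ i ∈ O, 0 < i ∧ i < n) (x : Fin n) :
    #(clauseVars (shiftClause O x)) = #O + 1 := by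
  have hvars : clauseVars (shiftClause O x) = (insert 0 O).image fun i : ℕ => x + (i : Fin n) := by
    ext p
    simp only [clauseVars, mem_filter, mem_univ, true_and, isSome_shiftClause_iff, mem_image]
    exact ⟨fun ⟨i, hi, hp⟩ => ⟨i, hi, hp.symm⟩, fun ⟨i, hi, hp⟩ => ⟨i, hi, hp.symm⟩⟩
  have hlt : ∀ i ∈ insert 0 O, i < n := by
    simpa using ⟨Nat.pos_of_neZero n, fun i hi => (hO i hi).2⟩
  rw [hvars, card_image_of_injOn, card_insert_of_notMem fun h0 => (hO 0 h0).1.false]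
  intro a ha b hb hab
  have := congrArg Fin.val (add_left_cancel hab)
  simpa [Fin.val_natCast, Nat.mod_eq_of_lt (hlt a ha), Nat.mod_eq_of_lt (hlt b hb)] using this

theorem degree_shiftFamily_le (O : Finset ℕ) (i : Fin n) : degree (shiftFamily O) i ≤ #O + 1 := by
  set l := (List.finRange n).filter fun x => (shiftClause O x i).isSome
  have hsub : l.toFinset ⊆ (insert 0 O).image fun s : ℕ => i - (s : Fin n) := by
    intro x hx
    simp only [l, List.mem_toFinset, List.mem_filter, List.mem_finRange, true_and,
      isSome_shiftClause_iff] at hx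
    obtain ⟨s, hs, rfl⟩ := hx
    exact mem_image.2 ⟨s, hs, by ring⟩
  calc degree (shiftFamily O) i = l.length := by
        simp [degree, shiftFamily, l, List.filter_map, Function.comp_def]
    _ = #l.toFinset := (List.toFinset_card_of_nodup ((List.nodup_finRange n).filter _)).symm
    _ ≤ #((insert 0 O).image fun s : ℕ => i - (s : Fin n)) := card_le_card hsub
    _ ≤ #O + 1 := card_image_le.trans (card_insert_le _ _)

end Clauses

theorem degree_flatMap {n : ℕ} (l : List ℕ) (f : ℕ → Cnf n) (i : Fin n) :
    degree (l.flatMap f) i = (l.map fun j => degree (f j) i).sum := by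
  simp [degree, List.filter_flatMap, List.length_flatMap]

section Formula

variable {n k m : ℕ} [NeZero n]

def negOffsets (k j : ℕ) : Finset ℕ := (Icc 1 k).erase (k - j)

noncomputable def chainFormula (n k m : ℕ) [NeZero n] : Cnf n :=
  (List.range m).flatMap fun j => shiftFamily (negOffsets k j)

theorem satCnf_chainFormula_iff {σ : Assignment n} :
    satCnf σ (chainFormula n k m) ↔ ∀ j < m, ∀ x, clauseSat σ (shiftClause (negOffsets k j) x) := by
  simp only [satCnf, chainFormula, shiftFamily, List.mem_flatMap, List.mem_range, List.mem_map,
    List.mem_finRange, true_and]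
  exact ⟨fun h j hj x => h _ ⟨j, hj, x, rfl⟩, fun h _ ⟨j, hj, x, hc⟩ => hc ▸ h j hj x⟩

theorem satCnf_true_chainFormula : satCnf (fun _ => true) (chainFormula n k m) :=
  satCnf_chainFormula_iff.2 fun _ _ => clauseSat_true_shiftClause _

theorem memPhi_chainFormula {d : ℕ} (hmk : m ≤ k) (hkn : k ≤ n) (hm : k = n → m ≤ 1)
    (hd : m * k ≤ d) :
    memPhi n k d (chainFormula n k m) := by
  have hcard : ∀ j < m, #(negOffsets k j) + 1 = k := by
    intro j hj
    rw [negOffsets, card_erase_of_mem (by simp; omega), Nat.card_Icc]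
    omega
  refine ⟨fun c hc => ?_, fun i => ?_⟩
  · simp only [chainFormula, shiftFamily, List.mem_flatMap, List.mem_range, List.mem_map,
      List.mem_finRange, true_and] at hc
    obtain ⟨j, hj, x, rfl⟩ := hc
    rw [card_clauseVars_shiftClause, hcard j hj]
    intro i hi
    simp only [negOffsets, mem_erase, mem_Icc] at hi
    omega
  · calc degree (chainFormula n k m) i
        = ((List.range m).map fun j => degree (shiftFamily (negOffsets k j)) i).sum :=
          degree_flatMap _ _ i
      _ ≤ ((List.range m).map fun j => degree (shiftFamily (negOffsets k j)) i).length • k := by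
          refine List.sum_le_card_nsmul _ _ fun a ha => ?_
          obtain ⟨j, hj, rfl⟩ := List.mem_map.1 ha
          exact (degree_shiftFamily_le _ i).trans (hcard j (List.mem_range.1 hj)).le
      _ ≤ d := by simpa using hd

variable {σ : Assignment n}

theorem exists_false_of_satCnf_chainFormula (hσ : satCnf σ (chainFormula n k m)) {j : ℕ}
    (hj : j < m) {x : Fin n} (hx : σ x = false) :
    ∃ i, 1 ≤ i ∧ i ≤ k ∧ i ≠ k - j ∧ σ (x + i) = false := by
  obtain ⟨i, hi, hfalse⟩ :=
    exists_add_eq_false_of_clauseSat hx (satCnf_chainFormula_iff.1 hσ j hj x)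
  simp only [negOffsets, mem_erase, mem_Icc] at hi
  exact ⟨i, hi.2.1, hi.2.2, hi.1, hfalse⟩

theorem gap_le_of_satCnf_chainFormula (hσ : satCnf σ (chainFormula n k m)) (hm : 0 < m)
    {x : Fin n} (hx : σ x = false) : gap σ x ≤ k - 1 := by
  obtain ⟨i, hi1, hik, hi, hfalse⟩ := exists_false_of_satCnf_chainFormula hσ hm hx
  have := gap_le (by omega) hfalse
  omega

theorem gap_add_gap_le_of_satCnf_chainFormula (hσ : satCnf σ (chainFormula n k m))
    (hk : 0 < k) (hkm : k ≤ 2 * m) {x : Fin n} (hx : σ x = false) (hlong : k / 2 < gap σ x) :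
    gap σ x + gap σ (x + gap σ x) ≤ k := by
  set g := gap σ x
  have hgk : g ≤ k - 1 := gap_le_of_satCnf_chainFormula hσ (by omega) hx
  obtain ⟨i, hi1, hik, hig, hfalse⟩ :=
    exists_false_of_satCnf_chainFormula hσ (j := k - g) (by omega) hx
  have hgi : g < i := by
    by_contra! hle
    have := eq_true_of_lt_gap (σ := σ) (x := x) (t := i) (by omega) (by omega : i < g)
    rw [hfalse] at this
    exact Bool.false_ne_true this
  have hnext : σ (x + g + ((i - g : ℕ) : Fin n)) = false := by
    rwa [Nat.cast_sub hgi.le, add_add_sub_cancel]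
  have := gap_le (Nat.sub_pos_of_lt hgi) hnext
  omega

end Formula

section Density

variable {n k m : ℕ} [NeZero n] {σ : Assignment n}

theorem two_mul_le_mul_nFalse_of_satCnf_chainFormula (hσ : satCnf σ (chainFormula n k m))
    (hne : ∃ y, σ y = false) (hk : 0 < k) (hke : Even k) (hkm : k ≤ 2 * m) :
    2 * n ≤ k * nFalse σ := by
  have hk2 := Nat.div_mul_cancel hke.two_dvd
  have hamort : ∑ x ∈ univ.filter (σ · = false), gap σ x ≤ k / 2 * nFalse σ := by
    refine sum_le_mul_card_of_add_le (e := fun x => x + gap σ x) ?_ ?_ ?_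
    · intro x hx
      simpa using (gap_pos_and_false (by simpa using hx)).2
    · simpa using add_gap_injOn (σ := σ)
    · intro x hx hlong
      have := gap_add_gap_le_of_satCnf_chainFormula hσ hk hkm (by simpa using hx) hlong
      omega
  have := card_le_sum_gap hne
  nlinarith

theorem two_mul_le_mul_nFalse_of_satCnf_chainFormula_one (hσ : satCnf σ (chainFormula n n 1))
    (hne : ∃ y, σ y = false) : 2 * n ≤ n * nFalse σ := by
  have hsum : ∑ x ∈ univ.filter (σ · = false), gap σ x ≤ nFalse σ * (n - 1) :=
    (sum_le_card_nsmul _ _ _ fun x hx =>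
      gap_le_of_satCnf_chainFormula hσ one_pos (by simpa using hx)).trans_eq (smul_eq_mul _ _)
  have hn := card_le_sum_gap hne
  -- a single false variable would have a gap of length `n`
  have h2 : 2 ≤ nFalse σ := by
    by_contra! h
    have := (Nat.mul_le_mul_right (n - 1) (Nat.le_of_lt_succ h)).trans_eq (one_mul _)
    have := Nat.pos_of_neZero n
    omega
  exact (mul_comm 2 n).le.trans (Nat.mul_le_mul_left n h2)

end Density

theorem exists_eq_false_of_ne_true {n : ℕ} {σ : Assignment n} (hσ : σ ≠ fun _ => true) :
    ∃ y, σ y = false := by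
  obtain ⟨y, hy⟩ := Function.ne_iff.1 hσ
  exact ⟨y, by simpa using hy⟩

theorem exists_memPhi_two_mul_le_mul_nFalse {n k d : ℕ} [NeZero n] (hk : 2 ≤ k) (hke : Even k)
    (hd : k ^ 2 / 2 ≤ d) (hkn : k ≤ n) :
    ∃ Φ : Cnf n, memPhi n k d Φ ∧ satCnf (fun _ => true) Φ ∧
      ∀ σ, satCnf σ Φ → σ ≠ (fun _ => true) → 2 * n ≤ k * nFalse σ := by
  obtain rfl | hlt := hkn.eq_or_lt
  · refine ⟨chainFormula k k 1, memPhi_chainFormula (by omega) le_rfl (fun _ => le_rfl) ?_,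
      satCnf_true_chainFormula, fun σ hσ hne =>
        two_mul_le_mul_nFalse_of_satCnf_chainFormula_one hσ (exists_eq_false_of_ne_true hne)⟩
    refine le_trans ?_ hd
    rw [one_mul, Nat.le_div_iff_mul_le two_pos]
    nlinarith
  · refine ⟨chainFormula n k (k / 2), memPhi_chainFormula (by omega) hkn (fun h => by omega) ?_,
      satCnf_true_chainFormula, fun σ hσ hne =>
        two_mul_le_mul_nFalse_of_satCnf_chainFormula hσ (exists_eq_false_of_ne_true hne)
          (by omega) hke (Nat.mul_div_cancel' hke.two_dvd).ge⟩
    rwa [Nat.div_mul_right_comm hke.two_dvd, ← sq]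

section Probability

variable {n : ℕ} {Φ : Cnf n} {β : ℝ}

theorem mTrue_add_nFalse (σ : Assignment n) : mTrue σ + nFalse σ = n := by
  simpa [mTrue, nFalse] using card_filter_add_card_filter_not (s := univ) (σ · = true)

theorem weight_le_of_two_mul_le {k : ℕ} (hβ : k * log 2 ≤ β) {σ : Assignment n}
    (hσ : satCnf σ Φ → 2 * n ≤ k * nFalse σ) :
    weight β Φ σ ≤ exp (β * n) / 4 ^ n := by
  unfold weight
  split_ifs with hsat
  · have hF : (2 * n : ℝ) ≤ k * nFalse σ := by exact_mod_cast hσ hsat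
    have hm : (mTrue σ : ℝ) = n - nFalse σ := by
      rw [eq_sub_iff_add_eq]; exact_mod_cast mTrue_add_nFalse σ
    have h4 : (4 : ℝ) ^ n = exp (2 * n * log 2) := by
      rw [← exp_log (by norm_num : (0 : ℝ) < 4), ← exp_nat_mul, show (4 : ℝ) = 2 ^ 2 by norm_num,
        log_pow]
      push_cast
      ring_nf
    rw [h4, ← exp_sub, exp_le_exp, hm]
    nlinarith [log_pos one_lt_two, (nFalse σ).cast_nonneg (α := ℝ)]
  · positivity

theorem le_prob_true {k : ℕ} (hβ : k * log 2 ≤ β) (htrue : satCnf (fun _ => true) Φ)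
    (hdense : ∀ σ, satCnf σ Φ → σ ≠ (fun _ => true) → 2 * n ≤ k * nFalse σ) :
    1 / (1 + (2 : ℝ) ^ (-(n : ℤ))) ≤ prob β Φ (fun _ => true) := by
  have hw : weight β Φ (fun _ => true) = exp (β * n) := by
    simp [weight, htrue, mTrue]
  have hrest : ∑ σ ∈ univ.erase (fun _ => true), weight β Φ σ ≤ exp (β * n) * 2 ^ (-(n : ℤ)) :=
    calc ∑ σ ∈ univ.erase (fun _ => true), weight β Φ σ
        ≤ #(univ.erase fun _ => true) • (exp (β * n) / 4 ^ n) :=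
          sum_le_card_nsmul _ _ _ fun σ hσ =>
            weight_le_of_two_mul_le hβ fun hsat => hdense σ hsat (mem_erase.1 hσ).1
      _ ≤ (2 : ℝ) ^ n * (exp (β * n) / 4 ^ n) := by
          rw [nsmul_eq_mul]
          gcongr
          exact_mod_cast (card_erase_le).trans_eq (by simp)
      _ = exp (β * n) * 2 ^ (-(n : ℤ)) := by
          rw [zpow_neg, zpow_natCast, show (4 : ℝ) = 2 * 2 by norm_num, mul_pow]
          field_simp
  have hZ : Zfun β Φ = exp (β * n) + ∑ σ ∈ univ.erase (fun _ => true), weight β Φ σ := by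
    rw [Zfun, ← add_sum_erase _ _ (mem_univ _), hw]
  have hpos : 0 ≤ ∑ σ ∈ univ.erase (fun _ => true), weight β Φ σ :=
    sum_nonneg fun σ _ => by unfold weight; positivity
  rw [prob, hw, hZ, div_le_div_iff₀ (by positivity) (by positivity)]
  linarith

end Probability

section Flip

variable {n : ℕ}

def flipClause (c : Clause n) : Clause n := fun p => (c p).map not

def flipCnf (Φ : Cnf n) : Cnf n := Φ.map flipClause

theorem memPhi_flipCnf {k d : ℕ} {Φ : Cnf n} (h : memPhi n k d Φ) : memPhi n k d (flipCnf Φ) := by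
  refine ⟨fun c hc => ?_, fun i => ?_⟩
  · obtain ⟨c, hc', rfl⟩ := List.mem_map.1 hc
    simpa [clauseVars, flipClause] using h.1 c hc'
  · simpa [degree, flipCnf, flipClause, List.filter_map, Function.comp_def] using h.2 i

theorem clauseSat_flipClause_iff {σ : Assignment n} {c : Clause n} :
    clauseSat σ (flipClause c) ↔ clauseSat (fun i => !σ i) c := by
  refine exists_congr fun p => ?_
  cases h : c p <;> simp [flipClause, h, Bool.not_eq_eq_eq_not]

theorem satCnf_flipCnf_iff {σ : Assignment n} {Φ : Cnf n} :
    satCnf σ (flipCnf Φ) ↔ satCnf (fun i => !σ i) Φ := by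
  simp [satCnf, flipCnf, clauseSat_flipClause_iff]

theorem weight_flipCnf (β : ℝ) (Φ : Cnf n) (σ : Assignment n) :
    weight β (flipCnf Φ) (fun i => !σ i) = exp (β * n) * weight (-β) Φ σ := by
  have hm : (mTrue fun i => !σ i) = nFalse σ := by simp [mTrue, nFalse]
  have hsum : (mTrue σ : ℝ) + nFalse σ = n := by exact_mod_cast mTrue_add_nFalse σ
  simp only [weight, satCnf_flipCnf_iff, Bool.not_not, hm]
  split_ifs
  · rw [← exp_add]
    congr 1
    linear_combination β * hsum
  · simp

theorem prob_flipCnf_false (β : ℝ) (Φ : Cnf n) :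
    prob β (flipCnf Φ) (fun _ => false) = prob (-β) Φ (fun _ => true) := by
  have hinv : Function.Involutive fun σ : Assignment n => fun i => !σ i :=
    fun σ => funext fun i => Bool.not_not (σ i)
  have hZ : Zfun β (flipCnf Φ) = exp (β * n) * Zfun (-β) Φ := by
    rw [Zfun, Zfun, mul_sum, ← Equiv.sum_comp (hinv.toPerm _)]
    exact sum_congr rfl fun σ _ => weight_flipCnf β Φ σ
  have hw := weight_flipCnf β Φ fun _ => true
  simp only [Bool.not_true] at hw
  rw [prob, prob, hZ, hw, mul_div_mul_left _ _ (exp_ne_zero _)]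

end Flip

end KSat

theorem stmt0_general (k d n : ℕ) (hk4 : 4 ≤ k) (hke : Even k) (hd : k ^ 2 / 2 ≤ d)
    (hkn : k ≤ n) :
    (∃ Φ : Cnf n, memPhi n k d Φ ∧ satCnf (fun _ => true) Φ ∧
      ∀ β : ℝ, (k : ℝ) * Real.log 2 ≤ β →
        1 / (1 + (2 : ℝ) ^ (-(n : ℤ))) ≤ prob β Φ (fun _ => true)) ∧
    (∃ Φ' : Cnf n, memPhi n k d Φ' ∧
      ∀ β : ℝ, β ≤ -((k : ℝ) * Real.log 2) →
        1 / (1 + (2 : ℝ) ^ (-(n : ℤ))) ≤ prob β Φ' (fun _ => false)) := by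
  have : NeZero n := ⟨by omega⟩
  obtain ⟨Φ, hΦ, htrue, hdense⟩ :=
    KSat.exists_memPhi_two_mul_le_mul_nFalse (by omega) hke hd hkn
  refine ⟨⟨Φ, hΦ, htrue, fun β hβ => KSat.le_prob_true hβ htrue hdense⟩,
    ⟨KSat.flipCnf Φ, KSat.memPhi_flipCnf hΦ, fun β hβ => ?_⟩⟩
  rw [KSat.prob_flipCnf_false]
  exact KSat.le_prob_true (by linarith) htrue hdense

/-- for even `k ≥ 4`, `d ≥ k²/2` and `n ≥ k` a multiple of `k/2`, there are
formulas in `Φ_{n,k,d}` concentrating (for `β ≥ k ln 2`, resp. `β ≤ -k ln 2`) nearly all mass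
on the all-TRUE (resp. all-FALSE) assignment. -/
theorem stmt0 (k d n : ℕ) (hk4 : 4 ≤ k) (hke : Even k) (hd : k ^ 2 / 2 ≤ d)
    (hkn : k ≤ n) (hdvd : k / 2 ∣ n) :
    (∃ Φ : Cnf n, memPhi n k d Φ ∧ satCnf (fun _ => true) Φ ∧
      ∀ β : ℝ, (k : ℝ) * Real.log 2 ≤ β →
        1 / (1 + (2 : ℝ) ^ (-(n : ℤ))) ≤ prob β Φ (fun _ => true)) ∧
    (∃ Φ' : Cnf n, memPhi n k d Φ' ∧
      ∀ β : ℝ, β ≤ -((k : ℝ) * Real.log 2) →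
        1 / (1 + (2 : ℝ) ^ (-(n : ℤ))) ≤ prob β Φ' (fun _ => false)) :=
  stmt0_general k d n hk4 hke hd hkn
end

section
/- Let k ≥ 4 be an even integer and let n ≥ k be a multiple of k/2. If d ≥ k²/2 is an integer, then there is a formula Ψ₀ ∈ Φ_{n,k,d} such that every assignment σ satisfying Ψ₀ either has all n variables assigned TRUE, or assigns at least 2n/k variables to FALSE. Similarly (by symmetry), there is a formula Ψ₁ ∈ Φ_{n,k,d} such that every satisfying assignment of Ψ₁ either has all n variables assigned FALSE, or assigns at least 2n/k variables to TRUE. -/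
open Real Finset

attribute [local instance] Classical.propDecidable

/-! Place the `n = s·h` variables (`k = 2h`) on a cycle. The first part of `Ψ₀` forbids, on every
cyclic window of length `k`, the pattern `TRUE^{k-1} FALSE`; so once some variable is FALSE, a run of
`k - 1` TRUEs can never end, and every window of length `k - 1` contains a FALSE. Hence each of the
`s` aligned windows `[l·h, l·h + k)` has a FALSE among its first `k - 1` and among its last `k - 1`
positions; the second part forbids these windows to contain a single FALSE at an inner position,
so each holds at least two FALSEs. The aligned windows cover every variable exactly twice, which
gives at least `s = 2n/k` FALSEs. A variable lies in `k` windows of the first part and in at most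
two aligned windows, each carrying `k - 2` clauses, so its degree is at most
`3k - 4 ≤ k²/2`. `Ψ₁` is `Ψ₀` with every literal negated. -/

open Fin.NatCast Fin.CommRing

theorem forall_eq_true_of_run {g : ℕ → Bool} {L q : ℕ}
    (hrun : ∀ p, (∀ t < L, g (p + t) = true) → g (p + L) = true)
    (hq : ∀ t < L, g (q + t) = true) (t : ℕ) : g (q + t) = true := by
  induction t using Nat.strong_induction_on with
  | _ t ih =>
    by_cases ht : t < L
    · exact hq t ht
    · have := hrun (q + (t - L)) fun u hu => by
        rw [add_assoc]; exact ih _ (by omega)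
      rwa [add_assoc, Nat.sub_add_cancel (not_lt.1 ht)] at this

theorem two_le_card_filter_eq_false {g : ℕ → Bool} {x k : ℕ}
    (hfirst : ∃ a < k - 1, g (x + a) = false) (hlast : ∃ b < k - 1, g (x + 1 + b) = false)
    (hsingle : ∀ r, 1 ≤ r → r < k - 1 → ∃ t < k, g (x + t) ≠ decide (t ≠ r)) :
    2 ≤ #{t ∈ range k | g (x + t) = false} := by
  obtain ⟨a, ha, hga⟩ := hfirst
  obtain ⟨b, hb, hgb⟩ := hlast
  rw [add_assoc, add_comm 1] at hgb
  refine Finset.one_lt_card_iff.2 ?_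
  simp only [Finset.mem_filter, Finset.mem_range]
  by_cases hab : a = b + 1
  · subst hab
    obtain ⟨t, ht, hgt⟩ := hsingle (b + 1) (by omega) ha
    by_cases htb : t = b + 1
    · subst htb; simp [hga] at hgt
    · exact ⟨t, b + 1, ⟨ht, by simpa [htb] using hgt⟩, ⟨by omega, hga⟩, htb⟩
  · exact ⟨a, b + 1, ⟨by omega, hga⟩, ⟨by omega, hgb⟩, hab⟩

theorem sum_range_mul_eq_sum_sum {M : Type*} [AddCommMonoid M] (f : ℕ → M) (s h : ℕ) :
    ∑ x ∈ range (s * h), f x = ∑ l ∈ range s, ∑ t ∈ range h, f (l * h + t) := by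
  induction s with
  | zero => simp
  | succ s ih => rw [Nat.succ_mul, Finset.sum_range_add, ih, Finset.sum_range_succ]

theorem Function.Periodic.sum_range_comp_add {M : Type*} [AddCancelCommMonoid M] {f : ℕ → M}
    {N : ℕ} (hf : Function.Periodic f N) (c : ℕ) :
    ∑ x ∈ range N, f (x + c) = ∑ x ∈ range N, f x := by
  induction c with
  | zero => rfl
  | succ c ih =>
    rw [← ih]
    have h1 := Finset.sum_range_succ' (fun x => f (x + c)) N
    rw [Finset.sum_range_succ, zero_add, add_comm N c, hf c] at h1
    simpa only [add_right_comm _ 1 c, add_assoc, add_left_inj] using h1.symm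

theorem sum_sum_range_two_mul {M : Type*} [AddCancelCommMonoid M] {f : ℕ → M} {s h : ℕ}
    (hf : Function.Periodic f (s * h)) :
    ∑ l ∈ range s, ∑ t ∈ range (2 * h), f (l * h + t) = 2 • ∑ x ∈ range (s * h), f x := by
  have hshift : ∑ l ∈ range s, ∑ t ∈ range h, f (l * h + (h + t)) = ∑ x ∈ range (s * h), f x := by
    rw [← hf.sum_range_comp_add h, sum_range_mul_eq_sum_sum]
    simp only [add_right_comm _ _ h, add_assoc]
  simp only [two_mul, Finset.sum_range_add, Finset.sum_add_distrib, hshift, two_nsmul,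
    ← sum_range_mul_eq_sum_sum]

section window

variable {n k : ℕ}

/-- The clause on the cyclic window `p, p + 1, …, p + k - 1` violated exactly by the pattern `w`. -/
def windowClause (k : ℕ) (p : Fin n) (w : ℕ → Bool) : Clause n :=
  fun i => if (i - p).val < k then some (!w (i - p).val) else none

theorem isSome_windowClause (p : Fin n) (w : ℕ → Bool) (i : Fin n) :
    (windowClause k p w i).isSome ↔ (i - p).val < k := by
  unfold windowClause; split <;> simp_all

theorem clauseSat_windowClause [NeZero n] (hkn : k ≤ n) (σ : Assignment n) (p : Fin n)
    (w : ℕ → Bool) : clauseSat σ (windowClause k p w) ↔ ∃ t < k, σ (p + t) ≠ w t := by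
  constructor
  · rintro ⟨i, hi⟩
    unfold windowClause at hi
    split_ifs at hi with hlt
    refine ⟨(i - p).val, hlt, ?_⟩
    rw [Fin.cast_val_eq_self, add_sub_cancel, ← Option.some_inj.1 hi]
    simp
  · rintro ⟨t, ht, hσ⟩
    have hval : (p + t - p).val = t := by
      rw [add_sub_cancel_left, Fin.val_natCast, Nat.mod_eq_of_lt (ht.trans_le hkn)]
    refine ⟨p + t, ?_⟩
    simp only [windowClause, hval, if_pos ht]
    revert hσ
    cases σ (p + t) <;> cases w t <;> simp

theorem card_filter_val_equiv_lt (hkn : k ≤ n) (e : Fin n ≃ Fin n) :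
    #{i | (e i).val < k} = k := by
  rw [Finset.card_equiv e (t := {j | j.val < k}) (by simp), Fin.card_filter_val_lt,
    min_eq_right hkn]

theorem card_clauseVars_windowClause [NeZero n] (hkn : k ≤ n) (p : Fin n) (w : ℕ → Bool) :
    #(clauseVars (windowClause k p w)) = k := by
  simp only [clauseVars, isSome_windowClause]
  exact card_filter_val_equiv_lt hkn (Equiv.subRight p)

end window

theorem degree_map_toList {n : ℕ} {α : Type*} (S : Finset α) (f : α → Clause n) (i : Fin n) :
    degree (S.toList.map f) i = #{a ∈ S | (f a i).isSome} := by
  rw [degree, ← List.countP_eq_length_filter, List.countP_map, Finset.card_def, Finset.filter_val,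
    ← Finset.coe_toList, Multiset.filter_coe, Multiset.coe_card, List.countP_eq_length_filter]
  simp [Function.comp_def]

theorem degree_append {n : ℕ} (Φ Ψ : Cnf n) (i : Fin n) :
    degree (Φ ++ Ψ) i = degree Φ i + degree Ψ i := by
  simp [degree]

section gadget

variable {n : ℕ} [NeZero n]

theorem val_sub_natCast_mod {h m : ℕ} (hhn : h ∣ n) (hhm : h ∣ m) (i : Fin n) :
    (i - (m : Fin n)).val % h = i.val % h := by
  have hi : i.val = ((i - (m : Fin n)).val + (m : Fin n).val) % n := by
    rw [← Fin.val_add, sub_add_cancel]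
  obtain ⟨c, hc⟩ := (Nat.dvd_mod_iff hhn).2 hhm
  rw [hi, Nat.mod_mod_of_dvd _ hhn, Fin.val_natCast, hc, Nat.add_mul_mod_self_left]

theorem card_filter_val_sub_lt_le_two {h : ℕ} (hhn : h ∣ n) (i : Fin n) :
    #{l ∈ range (n / h) | (i - ((l * h : ℕ) : Fin n)).val < 2 * h} ≤ 2 := by
  have hh : 0 < h := Nat.pos_of_dvd_of_pos hhn (Nat.pos_of_neZero n)
  have hlt : ∀ l ∈ range (n / h), l * h < n := fun l hl => by
    rw [mul_comm]; exact (Nat.lt_div_iff_mul_lt' hhn l).1 (Finset.mem_range.1 hl)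
  calc _ ≤ #({i.val % h, i.val % h + h} : Finset ℕ) := by
        refine Finset.card_le_card_of_injOn (fun l => (i - ((l * h : ℕ) : Fin n)).val) ?_ ?_
        · intro l hl
          simp only [Finset.mem_coe, Finset.mem_filter] at hl
          set j := (i - ((l * h : ℕ) : Fin n)).val
          have hj : j % h = i.val % h := val_sub_natCast_mod hhn (Dvd.intro_left l rfl) i
          have hjh : j / h < 2 := Nat.div_lt_of_lt_mul (by linarith [hl.2])
          have := Nat.div_add_mod j h
          simp only [Finset.coe_insert, Finset.coe_singleton, Set.mem_insert_iff,
            Set.mem_singleton_iff]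
          generalize j / h = q at hjh this
          interval_cases q <;> omega
        · intro l hl l' hl' hll'
          simp only [Finset.mem_coe, Finset.mem_filter] at hl hl'
          have := congrArg Fin.val (sub_right_injective (Fin.ext hll'))
          rw [Fin.val_natCast, Fin.val_natCast, Nat.mod_eq_of_lt (hlt l hl.1),
            Nat.mod_eq_of_lt (hlt l' hl'.1)] at this
          exact Nat.eq_of_mul_eq_mul_right hh this
    _ ≤ 2 := Finset.card_le_two

noncomputable def runClauses (k : ℕ) : Cnf n :=
  (univ : Finset (Fin n)).toList.map fun p => windowClause k p fun t => decide (t < k - 1)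

noncomputable def blockClauses (h : ℕ) : Cnf n :=
  (range (n / h) ×ˢ Ico 1 (2 * h - 1)).toList.map fun x =>
    windowClause (2 * h) ((x.1 * h : ℕ) : Fin n) fun t => decide (t ≠ x.2)

theorem degree_runClauses {k : ℕ} (hkn : k ≤ n) (i : Fin n) : degree (runClauses k) i = k := by
  simp only [runClauses, degree_map_toList, isSome_windowClause]
  exact card_filter_val_equiv_lt hkn (Equiv.subLeft i)

theorem degree_blockClauses_le {h : ℕ} (hhn : h ∣ n) (i : Fin n) :
    degree (blockClauses h) i ≤ 2 * (2 * h - 2) := by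
  simp only [blockClauses, degree_map_toList, isSome_windowClause]
  rw [Finset.filter_product_left (fun l => (i - ((l * h : ℕ) : Fin n)).val < 2 * h),
    Finset.card_product, Nat.card_Ico]
  exact Nat.mul_le_mul_right _ (card_filter_val_sub_lt_le_two hhn i)

theorem memPhi_runClauses_append_blockClauses {h d : ℕ} (hhn : h ∣ n) (h2n : 2 * h ≤ n)
    (hd : 6 * h - 4 ≤ d) : memPhi n (2 * h) d (runClauses (2 * h) ++ blockClauses h) := by
  refine ⟨fun c hc => ?_, fun i => ?_⟩
  · simp only [runClauses, blockClauses, List.mem_append, List.mem_map] at hc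
    obtain ⟨_, _, rfl⟩ | ⟨_, _, rfl⟩ := hc <;> exact card_clauseVars_windowClause h2n _ _
  · have := degree_blockClauses_le hhn i
    rw [degree_append, degree_runClauses h2n]
    omega

theorem exists_add_eq_false_of_satCnf_runClauses {k : ℕ} (hkn : k ≤ n) {σ : Assignment n}
    (hsat : satCnf σ (runClauses k)) (hσ : ∃ i, σ i = false) (q : ℕ) :
    ∃ t < k - 1, σ ((q + t : ℕ) : Fin n) = false := by
  have hrun : ∀ p : ℕ, (∀ t < k - 1, σ ((p + t : ℕ) : Fin n) = true) →
      σ ((p + (k - 1) : ℕ) : Fin n) = true := by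
    intro p hp
    have := hsat _ (List.mem_map.2 ⟨p, Finset.mem_toList.2 (mem_univ _), rfl⟩)
    obtain ⟨t, htk, ht⟩ := (clauseSat_windowClause hkn σ _ _).1 this
    simp only [Nat.cast_add] at hp ⊢
    by_cases htk' : t < k - 1
    · simp [htk', hp t htk'] at ht
    · rw [show t = k - 1 by omega] at ht; simpa using ht
  by_contra! hq
  obtain ⟨i, hi⟩ := hσ
  have := forall_eq_true_of_run (g := fun x => σ (x : Fin n)) hrun
    (fun t ht => by simpa using hq t ht) (i - (q : Fin n)).val
  simp [Nat.cast_add, hi] at this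

theorem nFalse_eq_sum_range (σ : Assignment n) :
    nFalse σ = ∑ x ∈ range n, if σ (x : Fin n) = false then 1 else 0 := by
  rw [nFalse, Finset.card_filter,
    ← Fin.sum_univ_eq_sum_range (fun x => if σ (x : Fin n) = false then 1 else 0)]
  simp only [Fin.cast_val_eq_self]

theorem div_le_nFalse_of_satCnf {h : ℕ} (hhn : h ∣ n) (h2n : 2 * h ≤ n) {σ : Assignment n}
    (hsat : satCnf σ (runClauses (2 * h) ++ blockClauses h)) (hσ : ∃ i, σ i = false) :
    n / h ≤ nFalse σ := by
  set s := n / h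
  have hn : n = s * h := (Nat.div_mul_cancel hhn).symm
  set f : ℕ → ℕ := fun x => if σ (x : Fin n) = false then 1 else 0
  have hper : Function.Periodic f (s * h) := fun x => by simp [f, ← hn]
  have hfalse := exists_add_eq_false_of_satCnf_runClauses h2n
    (fun c hc => hsat c (List.mem_append_left _ hc)) hσ
  have hwindow : ∀ l ∈ range s, 2 ≤ ∑ t ∈ range (2 * h), f (l * h + t) := by
    intro l hl
    simp only [f, ← Finset.card_filter]
    refine two_le_card_filter_eq_false (g := fun x => σ (x : Fin n)) (hfalse _) (hfalse _)
      fun r hr1 hr2 => ?_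
    have := hsat _ (List.mem_append_right _ (List.mem_map.2 ⟨(l, r),
      Finset.mem_toList.2 (Finset.mem_product.2 ⟨hl, Finset.mem_Ico.2 ⟨hr1, hr2⟩⟩), rfl⟩))
    simpa using (clauseSat_windowClause h2n σ _ _).1 this
  have := Finset.sum_le_sum hwindow
  rw [sum_sum_range_two_mul hper, ← hn, ← nFalse_eq_sum_range, Finset.sum_const,
    Finset.card_range, smul_eq_mul, smul_eq_mul] at this
  omega

end gadget

theorem mTrue_eq_of_forall {n : ℕ} {σ : Assignment n} (hσ : ∀ i, σ i = true) : mTrue σ = n := by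
  simp [mTrue, hσ]

theorem exists_memPhi_mTrue_eq_or_div_le_nFalse {n h d : ℕ} (hhn : h ∣ n) (h2n : 2 * h ≤ n)
    (hd : 6 * h - 4 ≤ d) :
    ∃ Ψ : Cnf n, memPhi n (2 * h) d Ψ ∧
      ∀ σ : Assignment n, satCnf σ Ψ → mTrue σ = n ∨ n / h ≤ nFalse σ := by
  rcases Nat.eq_zero_or_pos n with rfl | hn
  · exact ⟨[], ⟨by simp, by simp [degree]⟩, fun σ _ => Or.inl (by simp [mTrue])⟩
  have : NeZero n := ⟨hn.ne'⟩
  refine ⟨_, memPhi_runClauses_append_blockClauses hhn h2n hd, fun σ hsat => ?_⟩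
  by_cases hσ : ∀ i, σ i = true
  · exact Or.inl (mTrue_eq_of_forall hσ)
  · exact Or.inr (div_le_nFalse_of_satCnf hhn h2n hsat (by simpa using hσ))

section flip

variable {n : ℕ}

def flipClause (c : Clause n) : Clause n := fun i => (c i).map (!·)

theorem clauseVars_flipClause (c : Clause n) : clauseVars (flipClause c) = clauseVars c := by
  simp [clauseVars, flipClause]

theorem degree_map_flipClause (Φ : Cnf n) (i : Fin n) :
    degree (Φ.map flipClause) i = degree Φ i := by
  simp [degree, flipClause, List.filter_map, Function.comp_def]

theorem memPhi_map_flipClause {k d : ℕ} {Φ : Cnf n} (hΦ : memPhi n k d Φ) :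
    memPhi n k d (Φ.map flipClause) := by
  refine ⟨fun c hc => ?_, fun i => (degree_map_flipClause Φ i).trans_le (hΦ.2 i)⟩
  obtain ⟨c, hcΦ, rfl⟩ := List.mem_map.1 hc
  rw [clauseVars_flipClause]
  exact hΦ.1 c hcΦ

theorem satCnf_map_flipClause (σ : Assignment n) (Φ : Cnf n) :
    satCnf σ (Φ.map flipClause) ↔ satCnf (fun i => !σ i) Φ := by
  simp [satCnf, clauseSat, flipClause]

theorem mTrue_not (σ : Assignment n) : mTrue (fun i => !σ i) = nFalse σ := by
  simp [mTrue, nFalse]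

theorem nFalse_not (σ : Assignment n) : nFalse (fun i => !σ i) = mTrue σ := by
  simp [mTrue, nFalse]

end flip

theorem stmt3_general (k n d : ℕ) (hke : Even k) (hkn : k ≤ n) (hdvd : k / 2 ∣ n)
    (hd : k ^ 2 / 2 ≤ d) :
    (∃ Ψ : Cnf n, memPhi n k d Ψ ∧
      ∀ σ : Assignment n, satCnf σ Ψ → mTrue σ = n ∨ 2 * n / k ≤ nFalse σ) ∧
    (∃ Ψ : Cnf n, memPhi n k d Ψ ∧
      ∀ σ : Assignment n, satCnf σ Ψ → nFalse σ = n ∨ 2 * n / k ≤ mTrue σ) := by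
  obtain ⟨h, rfl⟩ := hke
  rw [← two_mul] at hkn hdvd hd ⊢
  rw [Nat.mul_div_cancel_left h two_pos] at hdvd
  rw [Nat.mul_div_mul_left n h two_pos]
  have hdeg : 6 * h - 4 ≤ d := by
    have hsq : (2 * h) ^ 2 / 2 = 2 * h ^ 2 := by ring_nf; omega
    have : 6 * h ≤ 2 * h ^ 2 + 4 := by
      rcases Nat.lt_or_ge h 3 with h3 | h3
      · interval_cases h <;> norm_num
      · nlinarith
    omega
  obtain ⟨Ψ, hΨ, hsat⟩ := exists_memPhi_mTrue_eq_or_div_le_nFalse hdvd hkn hdeg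
  refine ⟨⟨Ψ, hΨ, hsat⟩, ⟨_, memPhi_map_flipClause hΨ, fun σ hσ => ?_⟩⟩
  rw [satCnf_map_flipClause] at hσ
  simpa only [mTrue_not, nFalse_not] using hsat _ hσ

/-- the gadget lemma. For even `k ≥ 4`, `n ≥ k` a multiple of `k/2`, and
`d ≥ k²/2`, there are formulas `Ψ₀, Ψ₁ ∈ Φ_{n,k,d}` such that every satisfying assignment
of `Ψ₀` is either all-TRUE or has at least `2n/k` FALSEs, and symmetrically for `Ψ₁`. -/
theorem stmt3 (k n d : ℕ) (hk4 : 4 ≤ k) (hke : Even k) (hkn : k ≤ n) (hdvd : k / 2 ∣ n)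
    (hd : k ^ 2 / 2 ≤ d) :
    (∃ Ψ : Cnf n, memPhi n k d Ψ ∧
      ∀ σ : Assignment n, satCnf σ Ψ → mTrue σ = n ∨ 2 * n / k ≤ nFalse σ) ∧
    (∃ Ψ : Cnf n, memPhi n k d Ψ ∧
      ∀ σ : Assignment n, satCnf σ Ψ → nFalse σ = n ∨ 2 * n / k ≤ mTrue σ) :=
  stmt3_general k n d hke hkn hdvd hd
end

section
/- Let k ≥ 4 be an even integer and let n ≥ k be a multiple of k/2. If σ ≠ σ⁺ is an assignment satisfying Ψ₀, then for every ℓ ∈ {0,1,…,2n/k − 1}, σ assigns at least one variable in C_{ℓk/2} ∪ C_{(ℓ+1)k/2} to FALSE, and σ assigns at least 2n/k variables to FALSE in total. -/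
open Real Finset

attribute [local instance] Classical.propDecidable

/-- `m ∈ Ξ_i^π`, i.e. `m = π((i+j) mod n)` for some `0 ≤ j ≤ k/2 − 1`. -/
def inXi (n k : ℕ) (pp : Equiv.Perm (Fin n)) (i : ℕ) (m : Fin n) : Prop :=
  ∃ j < k / 2, ((pp.symm m : Fin n) : ℕ) = (i + j) % n

/-- The length-`k` clause `W^π_{i,ℓ} ∨ Π^π_{i+k/2}`: `x_ℓ` appears positively, all other
variables of `C_i^π` and all variables of `C_{i+k/2}^π` appear negatively. -/
noncomputable def gClause (n k : ℕ) (pp : Equiv.Perm (Fin n)) (i : ℕ) (ℓ : Fin n) : Clause n :=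
  fun m =>
    if m = ℓ then some true
    else if inXi n k pp i m ∨ inXi n k pp (i + k / 2) m then some false
    else none

/-- The formula `Ψ₀^π`, with clause set `{ W^π_{i,ℓ} ∨ Π^π_{i+k/2} : i ∈ N, ℓ ∈ Ξ_i^π }`. -/
noncomputable def Psi0 (n k : ℕ) (pp : Equiv.Perm (Fin n)) : Cnf n :=
  (List.range n).flatMap fun i =>
    (List.finRange n).filterMap fun ℓ =>
      if inXi n k pp i ℓ then some (gClause n k pp i ℓ) else none


/-!
Unroll the cycle at a FALSE variable and let `F ⊆ ℕ` be the set of FALSE positions. With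
`h = k/2`, the clauses of `Ψ₀` say that a window of `h` consecutive positions holding exactly one
point of `F` is followed by a window holding at least one. Hence consecutive points of `F` are at
most `2h - 1` apart, which gives the first claim. Moreover, if `u₀ = 0 < u₁ < ⋯` enumerates `F`,
then `u_{j+2} ≤ max (u_{j+1} + h) (u_j + 2h)`, so `u_j < h (j + 1)`: the first `n / h` points of
`F` lie in one turn of the cycle and are distinct FALSE variables.
-/

lemma nth_succ_le_of_lt {p : ℕ → Prop} {j t : ℕ} (ht : p t) (hlt : Nat.nth p j < t) :
    Nat.nth p (j + 1) ≤ t :=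
  le_of_not_gt fun h => (Nat.le_nth_of_lt_nth_succ h ht).not_gt hlt

/-- The constraint that the clauses `W_{i,ℓ} ∨ Π_{i+h}` put on the set `F` of FALSE positions. -/
def WindowRule (h : ℕ) (F : ℕ → Prop) : Prop :=
  ∀ b q, b ≤ q → q < b + h → (∀ s, b ≤ s → s < b + h → (F s ↔ s = q)) →
    ∃ s, b + h ≤ s ∧ s < b + 2 * h ∧ F s

namespace WindowRule

variable {h : ℕ} {F : ℕ → Prop} (hF : WindowRule h F) (hh : 0 < h)
include hF hh

lemma exists_gt_le_of_mem {a : ℕ} (ha : F a) : ∃ t, a < t ∧ t ≤ a + (2 * h - 1) ∧ F t := by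
  by_cases hnext : ∃ t, a < t ∧ t < a + h ∧ F t
  · obtain ⟨t, hat, hta, ht⟩ := hnext
    exact ⟨t, hat, by omega, ht⟩
  · push Not at hnext
    obtain ⟨t, hat, hta, ht⟩ := hF a a le_rfl (by omega) fun s has hsa =>
      ⟨fun hs => by_contra fun hne => hnext s (by omega) hsa hs, fun e => e ▸ ha⟩
    exact ⟨t, by omega, by omega, ht⟩

lemma exists_mem_near (h0 : F 0) (s : ℕ) : ∃ t, s ≤ t ∧ t ≤ s + (2 * h - 2) ∧ F t := by
  induction s with
  | zero => exact ⟨0, le_rfl, Nat.zero_le _, h0⟩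
  | succ s ih =>
    obtain ⟨t, hst, hts, ht⟩ := ih
    rcases hst.lt_or_eq with hlt | rfl
    · exact ⟨t, hlt, by omega, ht⟩
    · obtain ⟨t', hlt, hle, ht'⟩ := hF.exists_gt_le_of_mem hh ht
      exact ⟨t', hlt, by omega, ht'⟩

lemma infinite (h0 : F 0) : (Set.ofPred F).Infinite :=
  Set.infinite_of_forall_exists_gt fun a =>
    let ⟨t, hat, _, ht⟩ := hF.exists_mem_near hh h0 (a + 1)
    ⟨t, ht, hat⟩

/-- After a gap of length `≥ h` the next gap has length `≤ h`; after a shorter gap, the two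
next gaps together have length `≤ 2h`. -/
lemma nth_add_two_le (h0 : F 0) (j : ℕ) :
    Nat.nth F (j + 2) ≤ max (Nat.nth F (j + 1) + h) (Nat.nth F j + 2 * h) := by
  have hinf := hF.infinite hh h0
  set a := Nat.nth F j
  set q := Nat.nth F (j + 1)
  have haq : a < q := Nat.nth_strictMono hinf (Nat.lt_succ_self j)
  have hq : F q := Nat.nth_mem_of_infinite hinf _
  have hgap : ∀ s, a < s → s < q → ¬ F s := fun s has hsq hs =>
    (Nat.le_nth_of_lt_nth_succ hsq hs).not_gt has
  have hnext : ∀ s, q < s → F s → Nat.nth F (j + 2) ≤ s := fun s hqs hs =>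
    nth_succ_le_of_lt hs hqs
  by_cases hlong : a + h ≤ q
  · obtain ⟨s, hqs, hsq, hs⟩ := hF (q + 1 - h) q (by omega) (by omega) fun s hbs hsb =>
      ⟨fun hs => by_contra fun hne => hgap s (by omega) (by omega) hs, fun e => e ▸ hq⟩
    exact (hnext s (by omega) hs).trans (le_max_of_le_left (by omega))
  by_cases hthird : ∃ s, q < s ∧ s ≤ a + h ∧ F s
  · obtain ⟨s, hqs, hsa, hs⟩ := hthird
    exact (hnext s hqs hs).trans (le_max_of_le_right (by omega))
  push Not at hthird
  obtain ⟨s, has, hsa, hs⟩ := hF (a + 1) q (by omega) (by omega) fun s hbs hsb =>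
    ⟨fun hs => by
      by_contra hne
      rcases Nat.lt_or_gt_of_ne hne with hsq | hqs
      · exact hgap s (by omega) hsq hs
      · exact hthird s hqs (by omega) hs, fun e => e ▸ hq⟩
  exact (hnext s (by omega) hs).trans (le_max_of_le_right (by omega))

lemma nth_lt_mul (h0 : F 0) (j : ℕ) : Nat.nth F j < h * (j + 1) := by
  induction j using Nat.twoStepInduction with
  | zero => rw [Nat.nth_zero_of_zero h0]; omega
  | one =>
    obtain ⟨t, hlt, hle, ht⟩ := hF.exists_gt_le_of_mem hh h0
    have : Nat.nth F 1 ≤ t := nth_succ_le_of_lt ht (by rwa [Nat.nth_zero_of_zero h0])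
    omega
  | more j ih₀ ih₁ =>
    have := hF.nth_add_two_le hh h0 j
    simp only [mul_add, mul_one] at ih₀ ih₁ ⊢
    omega

end WindowRule

section Psi0

variable {n k : ℕ}

lemma inXi_congr_mod {pp : Equiv.Perm (Fin n)} {i i' : ℕ} (h : i % n = i' % n) (m : Fin n) :
    inXi n k pp i m ↔ inXi n k pp i' m := by
  have key : ∀ j, (i + j) % n = (i' + j) % n := fun j => Nat.ModEq.add_right j h
  unfold inXi
  simp only [key]

lemma gClause_mem_Psi0 {pp : Equiv.Perm (Fin n)} {i : ℕ} (hi : i < n) {ℓ : Fin n}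
    (hℓ : inXi n k pp i ℓ) : gClause n k pp i ℓ ∈ Psi0 n k pp :=
  List.mem_flatMap.2 ⟨i, List.mem_range.2 hi,
    List.mem_filterMap.2 ⟨ℓ, List.mem_finRange ℓ, if_pos hℓ⟩⟩

lemma exists_false_of_unique_false {pp : Equiv.Perm (Fin n)} {σ : Assignment n}
    (hsat : satCnf σ (Psi0 n k pp)) {i : ℕ} {q : Fin n} (hq : inXi n k pp i q)
    (hσq : σ q = false) (hrest : ∀ m, inXi n k pp i m → m ≠ q → σ m = true) :
    ∃ m, inXi n k pp (i + k / 2) m ∧ σ m = false := by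
  have hmod := Nat.mod_mod i n
  obtain ⟨m, hm⟩ :=
    hsat _ (gClause_mem_Psi0 (Nat.mod_lt i q.pos) ((inXi_congr_mod hmod q).2 hq))
  simp only [gClause] at hm
  split_ifs at hm with hmq hwin
  · subst hmq
    simp [hσq] at hm
  · rcases hwin with hwin | hwin
    · simpa [← Option.some.inj hm] using hrest m ((inXi_congr_mod hmod m).1 hwin) hmq
    · exact ⟨m, (inXi_congr_mod (Nat.mod_add_mod i n _) m).1 hwin, (Option.some.inj hm).symm⟩

def advance (p : Fin n) (s : ℕ) : Fin n := ⟨(p + s) % n, Nat.mod_lt _ p.pos⟩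

lemma advance_zero (p : Fin n) : advance p 0 = p :=
  Fin.ext (Nat.mod_eq_of_lt p.isLt)

lemma advance_injOn (p : Fin n) : Set.InjOn (advance p) (Set.Iio n) := by
  intro a ha b hb e
  have hab : a ≡ b [MOD n] := Nat.ModEq.add_left_cancel' p (congrArg Fin.val e)
  rwa [Nat.ModEq, Nat.mod_eq_of_lt ha, Nat.mod_eq_of_lt hb] at hab

lemma inXi_refl_add_iff (p : Fin n) (b : ℕ) (m : Fin n) :
    inXi n k (Equiv.refl _) (p + b) m ↔ ∃ s, b ≤ s ∧ s < b + k / 2 ∧ m = advance p s := by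
  simp only [inXi, Equiv.refl_symm, Equiv.refl_apply, advance, Fin.ext_iff]
  constructor
  · rintro ⟨j, hj, e⟩
    exact ⟨b + j, by omega, by omega, by rw [e, add_assoc]⟩
  · rintro ⟨s, hbs, hsb, e⟩
    exact ⟨s - b, by omega, by rw [e]; congr 1; omega⟩

lemma windowRule_of_satCnf {σ : Assignment n} (hsat : satCnf σ (Psi0 n k (Equiv.refl _)))
    (p : Fin n) : WindowRule (k / 2) fun s => σ (advance p s) = false := by
  intro b q hbq hqb hwin
  obtain ⟨m, hm, hσm⟩ := exists_false_of_unique_false hsat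
    ((inXi_refl_add_iff p b _).2 ⟨q, hbq, hqb, rfl⟩) ((hwin q hbq hqb).2 rfl) fun m hm hmq => by
      obtain ⟨s, hbs, hsb, rfl⟩ := (inXi_refl_add_iff p b m).1 hm
      have hsq : s ≠ q := by rintro rfl; exact hmq rfl
      simpa using mt (hwin s hbs hsb).1 hsq
  rw [add_assoc, inXi_refl_add_iff] at hm
  obtain ⟨s, hbs, hsb, rfl⟩ := hm
  exact ⟨s, hbs, by omega, hσm⟩

variable (hk : 2 ≤ k) {σ : Assignment n} (hsat : satCnf σ (Psi0 n k (Equiv.refl _)))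
  {p : Fin n} (hp : σ p = false)
include hk hsat hp

lemma exists_false_inXi_or_inXi_add (i : ℕ) :
    ∃ m, (inXi n k (Equiv.refl _) i m ∨ inXi n k (Equiv.refl _) (i + k / 2) m) ∧
      σ m = false := by
  obtain ⟨t, hst, hts, ht⟩ := (windowRule_of_satCnf hsat p).exists_mem_near (by omega)
    (by simpa [advance_zero] using hp) (i + (n - p))
  have hval : (advance p t : ℕ) = (i + (t - (i + (n - p)))) % n := by
    rw [show (advance p t : ℕ) = (p + t) % n from rfl, show (p : ℕ) + t = i + (t - (i + (n - p))) + n by omega, Nat.add_mod_right]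
  refine ⟨advance p t, ?_, ht⟩
  simp only [inXi, Equiv.refl_symm, Equiv.refl_apply, hval]
  by_cases hnear : t - (i + (n - p)) < k / 2
  · exact Or.inl ⟨_, hnear, rfl⟩
  · exact Or.inr ⟨t - (i + (n - p)) - k / 2, by omega, by congr 1; omega⟩

lemma div_half_le_nFalse : n / (k / 2) ≤ nFalse σ := by
  set F : ℕ → Prop := fun s => σ (advance p s) = false
  have hF : WindowRule (k / 2) F := windowRule_of_satCnf hsat p
  have hh : 0 < k / 2 := by omega
  have h0 : F 0 := by simpa [F, advance_zero] using hp
  have hinf := hF.infinite hh h0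
  have hlt : ∀ j < n / (k / 2), Nat.nth F j < n := fun j hj =>
    calc Nat.nth F j < k / 2 * (j + 1) := hF.nth_lt_mul hh h0 j
      _ ≤ k / 2 * (n / (k / 2)) := Nat.mul_le_mul_left _ hj
      _ ≤ n := Nat.mul_div_le n (k / 2)
  have hcard := Finset.card_le_card_of_injOn (s := range (n / (k / 2)))
    (t := univ.filter fun m => σ m = false) (advance p ∘ Nat.nth F)
    (fun j _ => by simpa using Nat.nth_mem_of_infinite hinf j)
    (fun a ha b hb e => Nat.nth_injective hinf <|
      advance_injOn p (hlt a (by simpa using ha)) (hlt b (by simpa using hb)) e)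
  simpa [nFalse] using hcard

end Psi0

theorem stmt4_general (k n : ℕ) (hk4 : 4 ≤ k)
    (σ : Assignment n) (hsat : satCnf σ (Psi0 n k (Equiv.refl (Fin n))))
    (hne : σ ≠ fun _ => true) :
    (∀ ℓ < 2 * n / k, ∃ m : Fin n,
      (inXi n k (Equiv.refl (Fin n)) (ℓ * (k / 2)) m ∨
        inXi n k (Equiv.refl (Fin n)) ((ℓ + 1) * (k / 2)) m) ∧ σ m = false) ∧
    2 * n / k ≤ nFalse σ := by
  obtain ⟨p, hp⟩ : ∃ p, σ p = false := by
    by_contra! hall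
    exact hne (funext fun p => by simpa using hall p)
  refine ⟨fun ℓ _ => ?_, ?_⟩
  · simpa only [add_one_mul] using exists_false_inXi_or_inXi_add (by omega) hsat hp (ℓ * (k / 2))
  · calc 2 * n / k ≤ 2 * n / (2 * (k / 2)) := Nat.div_le_div_left (Nat.mul_div_le k 2) (by omega)
      _ = n / (k / 2) := Nat.mul_div_mul_left n (k / 2) two_pos
      _ ≤ nFalse σ := div_half_le_nFalse (by omega) hsat hp

/-- if `σ ≠ σ⁺` satisfies `Ψ₀`, then for every `ℓ ∈ {0,…,2n/k−1}` some variable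
of `C_{ℓk/2} ∪ C_{(ℓ+1)k/2}` is FALSE under `σ`, and `σ` has at least `2n/k` FALSEs. -/
theorem stmt4 (k n : ℕ) (hk4 : 4 ≤ k) (hke : Even k) (hkn : k ≤ n) (hdvd : k / 2 ∣ n)
    (σ : Assignment n) (hsat : satCnf σ (Psi0 n k (Equiv.refl (Fin n))))
    (hne : σ ≠ fun _ => true) :
    (∀ ℓ < 2 * n / k, ∃ m : Fin n,
      (inXi n k (Equiv.refl (Fin n)) (ℓ * (k / 2)) m ∨
        inXi n k (Equiv.refl (Fin n)) ((ℓ + 1) * (k / 2)) m) ∧ σ m = false) ∧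
    2 * n / k ≤ nFalse σ :=
  stmt4_general k n hk4 σ hsat hne
end

section
/- Let k ≥ 4 be an even integer and let n ≥ k be a multiple of k/2, and let π be a permutation of N = {0,…,n−1}. Then in Ψ₀^π every clause contains exactly k distinct variables, and every variable x_j appears (positively or negatively) in at most k²/2 of the clauses { W^π_{i,ℓ} ∨ Π^π_{i+k/2} : i ∈ N, ℓ ∈ Ξ_i^π }. Consequently Ψ₀^π ∈ Φ_{n,k,d} for every integer d ≥ k²/2. -/
open Real Finset

attribute [local instance] Classical.propDecidable

/-!
Write `Ξ_i` for the window `{π(i), …, π(i + k/2 - 1)}` (indices mod `n`). Consecutive windows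
`Ξ_i` and `Ξ_{i+k/2}` are disjoint sets of size `k/2`, so each clause has `k` variables.
A variable `x_j` lies in exactly the windows `Ξ_i` with `π⁻¹(j) - i mod n < k/2`, hence in at most
`k/2` of the windows `Ξ_i` and `k/2` of the windows `Ξ_{i+k/2}`; each such `i` contributes the
`k/2` clauses indexed by `ℓ ∈ Ξ_i`, so `x_j` occurs in at most `k · k/2 = k²/2` clauses.
-/

open Finset

lemma List.countP_finRange {n : ℕ} (p : Fin n → Prop) [DecidablePred p] :
    (List.finRange n).countP (fun x => decide (p x)) = #{x | p x} := by
  simp [Fin.univ_def, List.countP_eq_length_filter, Finset.filter, Finset.card]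

lemma List.sum_map_range {M : Type*} [AddCommMonoid M] (n : ℕ) (f : ℕ → M) :
    ((List.range n).map f).sum = ∑ i ∈ Finset.range n, f i :=
  rfl

section Window

/-- The window `Ξ_i^π` as a finset. -/
noncomputable def Xi (n k : ℕ) (pp : Equiv.Perm (Fin n)) (i : ℕ) : Finset (Fin n) :=
  {m | inXi n k pp i m}

variable {n k : ℕ} {pp : Equiv.Perm (Fin n)}

lemma mem_Xi {i : ℕ} {m : Fin n} : m ∈ Xi n k pp i ↔ inXi n k pp i m := by
  simp [Xi]

lemma card_Xi (hkn : k / 2 ≤ n) (i : ℕ) : #(Xi n k pp i) = k / 2 := by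
  refine .symm <| (card_range (k / 2)).symm.trans <| card_bij
    (fun j hj => pp ⟨(i + j) % n, Nat.mod_lt _ (by rw [mem_range] at hj; omega)⟩) ?_ ?_ ?_
  · intro j hj
    exact mem_Xi.2 ⟨j, mem_range.1 hj, by simp⟩
  · intro a ha b hb hab
    rw [mem_range] at ha hb
    have hmod : (a + i) % n = (b + i) % n := by
      simpa [add_comm] using congrArg Fin.val (pp.injective hab)
    exact (Nat.ModEq.add_right_cancel' i hmod).eq_of_lt_of_lt (by omega) (by omega)
  · intro m hm
    obtain ⟨j, hj, hval⟩ := mem_Xi.1 hm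
    exact ⟨j, mem_range.2 hj, (pp.symm_apply_eq.1 (Fin.ext hval)).symm⟩

lemma disjoint_Xi_add_half (hkn : k ≤ n) (i : ℕ) :
    Disjoint (Xi n k pp i) (Xi n k pp (i + k / 2)) := by
  rw [disjoint_left]
  intro m h₁ h₂
  obtain ⟨a, ha, hva⟩ := mem_Xi.1 h₁
  obtain ⟨b, hb, hvb⟩ := mem_Xi.1 h₂
  have hmod : (a + i) % n = (k / 2 + b + i) % n := by
    rw [add_comm a, add_comm _ i, ← add_assoc, ← hva, ← hvb]
  have := (Nat.ModEq.add_right_cancel' i hmod).eq_of_lt_of_lt (by omega) (by omega)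
  omega

/-- For each offset `j < k/2`, at most one `i < n` has `π⁻¹(m) ≡ i + o + j (mod n)`. -/
lemma card_filter_mem_Xi_le (m : Fin n) (o : ℕ) :
    #{i ∈ range n | m ∈ Xi n k pp (i + o)} ≤ k / 2 := by
  have hsub : {i ∈ range n | m ∈ Xi n k pp (i + o)} ⊆
      (range (k / 2)).biUnion fun j => {i ∈ range n | (pp.symm m : ℕ) = (i + (o + j)) % n} := by
    intro i hi
    rw [mem_filter] at hi
    obtain ⟨j, hj, hval⟩ := mem_Xi.1 hi.2
    exact mem_biUnion.2 ⟨j, mem_range.2 hj, mem_filter.2 ⟨hi.1, by rw [hval, add_assoc]⟩⟩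
  have hsingle : ∀ j, #{i ∈ range n | (pp.symm m : ℕ) = (i + (o + j)) % n} ≤ 1 := by
    intro j
    refine card_le_one.2 fun a ha b hb => ?_
    rw [mem_filter, mem_range] at ha hb
    exact (Nat.ModEq.add_right_cancel' _ (ha.2.symm.trans hb.2)).eq_of_lt_of_lt ha.1 hb.1
  calc _ ≤ _ := card_le_card hsub
    _ ≤ ∑ j ∈ range (k / 2), 1 := card_biUnion_le.trans (sum_le_sum fun j _ => hsingle j)
    _ = k / 2 := by simp

end Window

section Psi0

variable {n k : ℕ} {pp : Equiv.Perm (Fin n)}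

lemma isSome_gClause {i : ℕ} {ℓ : Fin n} (hℓ : ℓ ∈ Xi n k pp i) (m : Fin n) :
    (gClause n k pp i ℓ m).isSome ↔ m ∈ Xi n k pp i ∪ Xi n k pp (i + k / 2) := by
  rw [mem_union, mem_Xi, mem_Xi]
  unfold gClause
  by_cases hm : m = ℓ
  · subst hm
    simp [mem_Xi.1 hℓ]
  · by_cases hc : inXi n k pp i m ∨ inXi n k pp (i + k / 2) m <;> simp [hm, hc]

lemma card_clauseVars_gClause (hke : Even k) (hkn : k ≤ n) {i : ℕ} {ℓ : Fin n}
    (hℓ : ℓ ∈ Xi n k pp i) :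
    #(clauseVars (gClause n k pp i ℓ)) = k := by
  have hvars : clauseVars (gClause n k pp i ℓ) = Xi n k pp i ∪ Xi n k pp (i + k / 2) := by
    ext m
    simp [clauseVars, isSome_gClause hℓ]
  have hhalf : k / 2 ≤ n := (Nat.div_le_self k 2).trans hkn
  rw [hvars, card_union_of_disjoint (disjoint_Xi_add_half hkn i), card_Xi hhalf, card_Xi hhalf,
    ← two_mul, Nat.two_mul_div_two_of_even hke]

lemma mem_Psi0 {c : Clause n} :
    c ∈ Psi0 n k pp ↔ ∃ i < n, ∃ ℓ : Fin n, inXi n k pp i ℓ ∧ gClause n k pp i ℓ = c := by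
  simp only [Psi0, List.mem_flatMap, List.mem_range, List.mem_filterMap, List.mem_finRange,
    true_and, Option.ite_none_right_eq_some, Option.some.injEq]

lemma countP_block_isSome (hkn : k ≤ n) (i : ℕ) (j : Fin n) :
    ((List.finRange n).filterMap fun ℓ =>
        if inXi n k pp i ℓ then some (gClause n k pp i ℓ) else none).countP
      (fun c => (c j).isSome) =
      if j ∈ Xi n k pp i ∪ Xi n k pp (i + k / 2) then k / 2 else 0 := by
  have hblock : ∀ ℓ, ((Option.map (fun c : Clause n => (c j).isSome)
      (if inXi n k pp i ℓ then some (gClause n k pp i ℓ) else none)).getD false) =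
      decide (ℓ ∈ Xi n k pp i ∧ j ∈ Xi n k pp i ∪ Xi n k pp (i + k / 2)) := by
    intro ℓ
    by_cases hℓ : inXi n k pp i ℓ
    · have hℓ' : ℓ ∈ Xi n k pp i := mem_Xi.2 hℓ
      simp [hℓ, hℓ', ← isSome_gClause hℓ']
    · simp [hℓ, mem_Xi]
  rw [List.countP_filterMap, funext hblock, List.countP_finRange]
  split_ifs with hj
  · simp [hj, card_Xi ((Nat.div_le_self k 2).trans hkn)]
  · simp [hj]

lemma degree_Psi0 (hkn : k ≤ n) (j : Fin n) :
    degree (Psi0 n k pp) j =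
      #{i ∈ range n | j ∈ Xi n k pp i ∨ j ∈ Xi n k pp (i + k / 2)} * (k / 2) := by
  unfold degree Psi0
  rw [← List.countP_eq_length_filter, List.countP_flatMap, Function.comp_def]
  simp_rw [countP_block_isSome hkn, List.sum_map_range, ← mem_union, sum_ite, sum_const_zero,
    add_zero, sum_const, smul_eq_mul]

lemma degree_Psi0_le (hke : Even k) (hkn : k ≤ n) (j : Fin n) :
    degree (Psi0 n k pp) j ≤ k ^ 2 / 2 := by
  have hwindows :
      #{i ∈ range n | j ∈ Xi n k pp i ∨ j ∈ Xi n k pp (i + k / 2)} ≤ k / 2 + k / 2 := by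
    rw [filter_or]
    exact (card_union_le _ _).trans
      (add_le_add (card_filter_mem_Xi_le j 0) (card_filter_mem_Xi_le j (k / 2)))
  calc degree (Psi0 n k pp) j ≤ (k / 2 + k / 2) * (k / 2) := by
        rw [degree_Psi0 hkn]
        exact Nat.mul_le_mul_right _ hwindows
    _ = k ^ 2 / 2 := by
        rw [← two_mul, Nat.two_mul_div_two_of_even hke, sq,
          Nat.mul_div_assoc k (even_iff_two_dvd.1 hke)]

end Psi0

theorem stmt8_general (k n : ℕ) (hke : Even k) (hkn : k ≤ n)
    (pp : Equiv.Perm (Fin n)) :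
    (∀ c ∈ Psi0 n k pp, (clauseVars c).card = k) ∧
    (∀ j : Fin n, degree (Psi0 n k pp) j ≤ k ^ 2 / 2) ∧
    (∀ d : ℕ, k ^ 2 / 2 ≤ d → memPhi n k d (Psi0 n k pp)) := by
  have hclause : ∀ c ∈ Psi0 n k pp, (clauseVars c).card = k := by
    intro c hc
    obtain ⟨i, -, ℓ, hℓ, rfl⟩ := mem_Psi0.1 hc
    exact card_clauseVars_gClause hke hkn (mem_Xi.2 hℓ)
  have hdeg := degree_Psi0_le (pp := pp) hke hkn
  exact ⟨hclause, hdeg, fun d hd => ⟨hclause, fun j => (hdeg j).trans hd⟩⟩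

/-- every clause of `Ψ₀^π` has exactly `k` distinct variables, every variable
appears in at most `k²/2` of its clauses, and hence `Ψ₀^π ∈ Φ_{n,k,d}` for every `d ≥ k²/2`. -/
theorem stmt8 (k n : ℕ) (hk4 : 4 ≤ k) (hke : Even k) (hkn : k ≤ n) (hdvd : k / 2 ∣ n)
    (pp : Equiv.Perm (Fin n)) :
    (∀ c ∈ Psi0 n k pp, (clauseVars c).card = k) ∧
    (∀ j : Fin n, degree (Psi0 n k pp) j ≤ k ^ 2 / 2) ∧
    (∀ d : ℕ, k ^ 2 / 2 ≤ d → memPhi n k d (Psi0 n k pp)) :=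
  stmt8_general k n hke hkn pp
end

section
/- The function f : (0,1) → ℝ defined by f(α) = −(α/(1−α))·ln α − ln(1−α) is strictly increasing on (0,1), tends to 0 as α → 0⁺ and to +∞ as α → 1⁻; consequently f is a bijection from (0,1) onto (0,∞). -/
/-!
Since `f'(α) = -ln α / (1 - α)²` is positive on `(0,1)`, `f` is strictly increasing there.
Near `0` both `α ln α` and `ln (1 - α)` vanish, so `f → 0`; near `1` the first term is
nonnegative while `-ln (1 - α) → +∞`. A continuous strictly increasing function on an open
interval with these one-sided limits maps it bijectively onto `(0, ∞)`, by the intermediate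
value theorem.
-/

/-- The function `f(α) = −(α/(1−α))·ln α − ln(1−α)`. -/
noncomputable def fGap (α : ℝ) : ℝ := -(α / (1 - α)) * Real.log α - Real.log (1 - α)

open Filter Set Topology Real

section

variable {α β : Type*} {f : α → β} {a b : α} {v : β}

theorem StrictMonoOn.mapsTo_Ioi_of_tendsto_nhdsGT [LinearOrder α] [DenselyOrdered α]
    [TopologicalSpace α] [OrderTopology α] [LinearOrder β] [TopologicalSpace β]
    [ClosedIicTopology β] (hab : a < b) (hf : StrictMonoOn f (Ioo a b))
    (ha : Tendsto f (𝓝[>] a) (𝓝 v)) : MapsTo f (Ioo a b) (Ioi v) := by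
  intro x hx
  obtain ⟨y, hay, hyx⟩ := exists_between hx.1
  have hy : y ∈ Ioo a b := ⟨hay, hyx.trans hx.2⟩
  have hv_le : v ≤ f y := by
    have := nhdsGT_neBot_of_exists_gt ⟨b, hab⟩
    refine le_of_tendsto ha ?_
    filter_upwards [Ioo_mem_nhdsGT hay] with z hz
    exact (hf ⟨hz.1, hz.2.trans hy.2⟩ hy hz.2).le
  exact hv_le.trans_lt (hf hy hx hyx)

theorem StrictMonoOn.bijOn_Ioo_Ioi [ConditionallyCompleteLinearOrder α] [DenselyOrdered α]
    [TopologicalSpace α] [OrderTopology α] [LinearOrder β] [TopologicalSpace β]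
    [OrderClosedTopology β] (hab : a < b) (hf : StrictMonoOn f (Ioo a b))
    (hcont : ContinuousOn f (Ioo a b)) (ha : Tendsto f (𝓝[>] a) (𝓝 v))
    (hb : Tendsto f (𝓝[<] b) atTop) : BijOn f (Ioo a b) (Ioi v) := by
  refine ⟨hf.mapsTo_Ioi_of_tendsto_nhdsGT hab ha, hf.injOn, ?_⟩
  have := left_nhdsWithin_Ioo_neBot hab
  have := right_nhdsWithin_Ioo_neBot hab
  exact isPreconnected_Ioo.intermediate_value_Ioi (l₁ := 𝓝[Ioo a b] a) (l₂ := 𝓝[Ioo a b] b)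
    inf_le_right inf_le_right hcont
    (ha.mono_left (nhdsWithin_mono _ Ioo_subset_Ioi_self))
    (hb.mono_left (nhdsWithin_mono _ Ioo_subset_Iio_self))

end

theorem hasDerivAt_fGap {α : ℝ} (h0 : 0 < α) (h1 : α < 1) :
    HasDerivAt fGap (-log α / (1 - α) ^ 2) α := by
  have hα : α ≠ 0 := h0.ne'
  have hα' : 1 - α ≠ 0 := sub_ne_zero.2 h1.ne'
  have hsub : HasDerivAt (fun x : ℝ => 1 - x) (-1) α := by
    simpa using (hasDerivAt_id α).const_sub 1
  have h : HasDerivAt (fun x => -(x / (1 - x)) * log x - log (1 - x)) _ α :=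
    (((hasDerivAt_id α).div hsub hα').neg.mul (hasDerivAt_log hα)).sub
      ((hasDerivAt_log hα').comp α hsub)
  refine h.congr_deriv ?_
  simp only [id, Pi.neg_apply, Pi.div_apply]
  field_simp
  ring

theorem continuousOn_fGap : ContinuousOn fGap (Ioo 0 1) := fun _ hx =>
  (hasDerivAt_fGap hx.1 hx.2).continuousAt.continuousWithinAt

theorem strictMonoOn_fGap : StrictMonoOn fGap (Ioo 0 1) := by
  refine strictMonoOn_of_deriv_pos (convex_Ioo 0 1) continuousOn_fGap fun x hx => ?_
  rw [interior_Ioo] at hx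
  rw [(hasDerivAt_fGap hx.1 hx.2).deriv]
  exact div_pos (neg_pos.2 (log_neg hx.1 hx.2)) (pow_pos (sub_pos.2 hx.2) 2)

theorem tendsto_fGap_nhdsGT_zero : Tendsto fGap (𝓝[>] 0) (𝓝 0) := by
  have hf : fGap = fun α => -(α * log α) / (1 - α) - log (1 - α) := by
    funext α
    rw [fGap, neg_mul, div_mul_eq_mul_div, neg_div]
  have hcont : ContinuousAt (fun α : ℝ => -(α * log α) / (1 - α) - log (1 - α)) 0 :=
    (continuous_mul_log.neg.continuousAt.div (by fun_prop) (by norm_num)).sub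
      ((continuousAt_log (by norm_num)).comp (by fun_prop))
  simpa [← hf] using hcont.tendsto.mono_left nhdsWithin_le_nhds

theorem tendsto_fGap_nhdsLT_one : Tendsto fGap (𝓝[<] 1) atTop := by
  have hsub : Tendsto (fun α : ℝ => 1 - α) (𝓝[<] 1) (𝓝[>] 0) := by
    simpa using (continuous_sub_left (1 : ℝ)).continuousWithinAt.tendsto_nhdsWithin
      (x := 1) (s := Iio 1) (t := Ioi 0) fun _ hx => sub_pos.2 hx
  refine tendsto_atTop_mono' _ ?_
    (tendsto_neg_atBot_atTop.comp (tendsto_log_nhdsGT_zero.comp hsub))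
  filter_upwards [Ioo_mem_nhdsLT zero_lt_one] with x hx
  have hfirst : 0 ≤ -(x / (1 - x)) * log x :=
    mul_nonneg_of_nonpos_of_nonpos (neg_nonpos.2 (div_pos hx.1 (sub_pos.2 hx.2)).le)
      (log_nonpos hx.1.le hx.2.le)
  simp only [Function.comp_apply, fGap]
  linarith

/-- `f` is strictly increasing on `(0,1)`, tends to `0` as `α → 0⁺`, tends to
`+∞` as `α → 1⁻`, and is a bijection from `(0,1)` onto `(0,∞)`. -/
theorem stmt13 :
    StrictMonoOn fGap (Set.Ioo (0 : ℝ) 1) ∧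
    Filter.Tendsto fGap (nhdsWithin 0 (Set.Ioi (0 : ℝ))) (nhds 0) ∧
    Filter.Tendsto fGap (nhdsWithin 1 (Set.Iio (1 : ℝ))) Filter.atTop ∧
    Set.BijOn fGap (Set.Ioo (0 : ℝ) 1) (Set.Ioi (0 : ℝ)) :=
  ⟨strictMonoOn_fGap, tendsto_fGap_nhdsGT_zero, tendsto_fGap_nhdsLT_one,
    strictMonoOn_fGap.bijOn_Ioo_Ioi zero_lt_one continuousOn_fGap tendsto_fGap_nhdsGT_zero
      tendsto_fGap_nhdsLT_one⟩
end

section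
/- Let k ≥ 4 be an even integer and let b > 1. There exists n₀ (depending on k and b) such that for every multiple n ≥ n₀ of k/2, every index i ∈ {0,…,n−1}, and every nonempty set S ⊆ {0,…,n−1} with |S| < n/b, the following holds: if π is a uniformly random permutation of {0,…,n−1}, then the probability that π({ i+j mod n : 0 ≤ j ≤ k/2 − 1 }) ∩ S = ∅ is at least (3/4)·(1 − 1/b)^{k/2}. -/
attribute [local instance] Classical.propDecidable

open Finset Filter Topology Equiv Nat

/-!
For the window `W = {i, i + 1, …, i + t - 1} mod n` with `t = k / 2`, each embedding `W ↪ Sᶜ`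
extended to a permutation and composed with the `(n - t)!` permutations fixing `W` pointwise gives
distinct permutations mapping `W` into `Sᶜ`. Hence the probability is at least
`∏_{j < t} (n - s - j) / (n - j)` with `s = |S| < n / b`, and every factor is at least
`1 - n / ((n - t) b)`, which tends to `1 - 1 / b`.
-/

theorem descFactorial_mul_factorial_le_card_perm_mapsTo {α : Type*} [Fintype α] [DecidableEq α]
    (W T : Finset α) :
    (#T).descFactorial #W * (Fintype.card α - #W)! ≤ #{π : Perm α | ∀ a ∈ W, π a ∈ T} := by
  have hext : ∀ f : W ↪ T, ∃ σ : Perm α, ∀ w : W, σ w = f w := fun f =>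
    Perm.exists_extending_pair _ _ Subtype.val_injective
      (Subtype.val_injective.comp f.injective)
  choose σ hσ using hext
  let Φ : (W ↪ T) × Perm {a // a ∉ W} → Perm α := fun fh => σ fh.1 * Perm.ofSubtype fh.2
  have hΦ : ∀ fh, ∀ w : W, Φ fh w = fh.1 w := fun fh w => by
    rw [Perm.mul_apply, Perm.ofSubtype_apply_of_not_mem fh.2 (not_not_intro w.2), hσ]
  have hΦ_inj : Function.Injective Φ := by
    rintro ⟨f₁, h₁⟩ ⟨f₂, h₂⟩ heq
    obtain rfl : f₁ = f₂ := by
      ext w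
      simpa only [hΦ] using congr($heq w)
    obtain rfl : h₁ = h₂ := Perm.ofSubtype_injective (mul_left_cancel heq)
    rfl
  calc (#T).descFactorial #W * (Fintype.card α - #W)!
      = #(univ : Finset ((W ↪ T) × Perm {a // a ∉ W})) := by
        rw [Finset.card_univ, Fintype.card_prod, Fintype.card_embedding_eq, Fintype.card_perm,
          Fintype.card_subtype_compl, Fintype.card_coe, Fintype.card_coe]
    _ ≤ _ := Finset.card_le_card_of_injOn Φ
        (fun fh _ => mem_filter.2 ⟨mem_univ _, fun a ha => by
          simpa only [hΦ fh ⟨a, ha⟩] using (fh.1 ⟨a, ha⟩).2⟩)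
        hΦ_inj.injOn

theorem one_sub_pow_mul_descFactorial_le {n s t : ℕ} {r : ℝ} (hr : r ≤ 1) (htn : t ≤ n)
    (hs : ∀ j < t, (s : ℝ) ≤ r * (n - j)) :
    (1 - r) ^ t * n.descFactorial t ≤ (n - s).descFactorial t := by
  induction t with
  | zero => simp
  | succ t ih =>
    have hst : (s : ℝ) ≤ r * (n - t) := hs t t.lt_succ_self
    have htn' : (t : ℝ) < n := by exact_mod_cast htn
    have hstn : s + t ≤ n := by
      have : (s : ℝ) + t ≤ n := by nlinarith
      exact_mod_cast this
    have hfactor : (1 - r) * (n - t) ≤ ((n - s - t : ℕ) : ℝ) := by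
      rw [Nat.cast_sub (by omega), Nat.cast_sub (by omega)]
      linarith
    rw [Nat.descFactorial_succ, Nat.descFactorial_succ, Nat.cast_mul, Nat.cast_mul,
      Nat.cast_sub (by omega : t ≤ n)]
    calc (1 - r) ^ (t + 1) * ((n - t) * n.descFactorial t)
        = ((1 - r) * (n - t)) * ((1 - r) ^ t * n.descFactorial t) := by ring
      _ ≤ ((n - s - t : ℕ) : ℝ) * (n - s).descFactorial t := by
        gcongr
        exact ih (by omega) fun j hj => hs j (by omega)

theorem eventually_mul_pow_mul_descFactorial_le {a b : ℝ} (ha : a < 1) (hb : 1 < b) (t : ℕ) :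
    ∀ᶠ n : ℕ in atTop, t ≤ n ∧ ∀ s : ℕ, (s : ℝ) < n / b →
      a * (1 - 1 / b) ^ t * n.descFactorial t ≤ (n - s).descFactorial t := by
  set r : ℕ → ℝ := fun n => n / (n + -t) / b
  have hb₀ : 0 < b := by linarith
  have hb_inv : 1 / b < 1 := by rwa [div_lt_one hb₀]
  have hr : Tendsto r atTop (𝓝 (1 / b)) := (tendsto_natCast_div_add_atTop (-(t : ℝ))).div_const b
  have hpow : Tendsto (fun n => (1 - r n) ^ t) atTop (𝓝 ((1 - 1 / b) ^ t)) :=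
    (hr.const_sub 1).pow t
  have hlt : a * (1 - 1 / b) ^ t < (1 - 1 / b) ^ t :=
    mul_lt_of_lt_one_left (pow_pos (by linarith) t) ha
  filter_upwards [eventually_gt_atTop t, hr.eventually_lt_const hb_inv,
    hpow.eventually_const_le hlt] with n htn hr₁ hpow_n
  refine ⟨htn.le, fun s hs => ?_⟩
  have hnt : (0 : ℝ) < n + -t := by
    have : (t : ℝ) < n := by exact_mod_cast htn
    linarith
  have hsr : ∀ j < t, (s : ℝ) ≤ r n * (n - j) := fun j hj => by
    have hj : (j : ℝ) ≤ t := by exact_mod_cast hj.le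
    calc (s : ℝ) ≤ n / b := hs.le
      _ = r n * (n + -t) := by simp only [r]; field_simp
      _ ≤ r n * (n - j) := by gcongr; linarith
  calc a * (1 - 1 / b) ^ t * n.descFactorial t ≤ (1 - r n) ^ t * n.descFactorial t := by gcongr
    _ ≤ (n - s).descFactorial t := one_sub_pow_mul_descFactorial_le hr₁.le htn.le hsr

theorem card_image_range_add_mod {n : ℕ} (hn : 0 < n) (i : ℕ) {t : ℕ} (htn : t ≤ n) :
    #((range t).image fun j => (⟨(i + j) % n, Nat.mod_lt _ hn⟩ : Fin n)) = t := by
  rw [Finset.card_image_of_injOn, card_range]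
  intro j₁ hj₁ j₂ hj₂ h
  have hmod : j₁ % n = j₂ % n := Nat.ModEq.add_left_cancel' i (Fin.mk.inj_iff.1 h)
  simp only [coe_range, Set.mem_Iio] at hj₁ hj₂
  rwa [Nat.mod_eq_of_lt (by omega), Nat.mod_eq_of_lt (by omega)] at hmod

theorem descFactorial_mul_factorial_le_card_perm_window {n : ℕ} (hn : 0 < n) (i : ℕ) {t : ℕ}
    (htn : t ≤ n) (S : Finset (Fin n)) :
    (n - #S).descFactorial t * (n - t)! ≤
      #{π : Perm (Fin n) | ∀ j < t, ∀ m : Fin n, (m : ℕ) = (i + j) % n → π m ∉ S} := by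
  set W := (range t).image fun j => (⟨(i + j) % n, Nat.mod_lt _ hn⟩ : Fin n)
  calc (n - #S).descFactorial t * (n - t)!
      = (#Sᶜ).descFactorial #W * (Fintype.card (Fin n) - #W)! := by
        rw [card_image_range_add_mod hn i htn, card_compl, Fintype.card_fin]
    _ ≤ _ := descFactorial_mul_factorial_le_card_perm_mapsTo W Sᶜ
    _ ≤ _ := card_le_card fun π hπ => by
      simp only [W, mem_filter, mem_univ, true_and, mem_image, mem_range, mem_compl] at hπ ⊢
      exact fun j hj m hm => hπ m ⟨j, hj, Fin.ext hm.symm⟩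

theorem stmt19_general (k : ℕ) (b : ℝ) (hb : 1 < b) :
    ∃ n₀ : ℕ, ∀ n : ℕ, n₀ ≤ n → k / 2 ∣ n →
      ∀ i : ℕ, i < n → ∀ S : Finset (Fin n), S.Nonempty → (S.card : ℝ) < (n : ℝ) / b →
        (3 / 4 : ℝ) * (1 - 1 / b) ^ (k / 2) ≤
          ((Finset.univ.filter (fun pp : Equiv.Perm (Fin n) =>
              ∀ j < k / 2, ∀ m : Fin n, (m : ℕ) = (i + j) % n → pp m ∉ S)).card : ℝ) /
            (Nat.factorial n : ℝ) := by
  obtain ⟨n₀, hn₀⟩ := eventually_atTop.1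
    (eventually_mul_pow_mul_descFactorial_le (a := 3 / 4) (by norm_num) hb (k / 2))
  refine ⟨n₀, fun n hn _ i hi S _ hS => ?_⟩
  obtain ⟨htn, hbound⟩ := hn₀ n hn
  have hcount := descFactorial_mul_factorial_le_card_perm_window (by omega) i htn S
  rw [le_div_iff₀ (by positivity), ← Nat.factorial_mul_descFactorial htn]
  calc 3 / 4 * (1 - 1 / b) ^ (k / 2) * (((n - k / 2)! * n.descFactorial (k / 2) : ℕ) : ℝ)
      = 3 / 4 * (1 - 1 / b) ^ (k / 2) * n.descFactorial (k / 2) * (n - k / 2)! := by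
        push_cast; ring
    _ ≤ (n - #S).descFactorial (k / 2) * (n - k / 2)! := by gcongr; exact hbound _ hS
    _ ≤ _ := by rw [← Nat.cast_mul]; exact Nat.cast_le.2 hcount

/-- for even `k ≥ 4` and `b > 1`, for all sufficiently large multiples `n` of
`k/2`, every index `i < n` and every nonempty `S ⊆ {0,…,n−1}` with `|S| < n/b`, a uniformly
random permutation `π` of `{0,…,n−1}` maps the window `{(i+j) mod n : 0 ≤ j ≤ k/2 − 1}`
disjointly from `S` with probability at least `(3/4)·(1 − 1/b)^{k/2}`. -/
theorem stmt19 (k : ℕ) (hk4 : 4 ≤ k) (hke : Even k) (b : ℝ) (hb : 1 < b) :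
    ∃ n₀ : ℕ, ∀ n : ℕ, n₀ ≤ n → k / 2 ∣ n →
      ∀ i : ℕ, i < n → ∀ S : Finset (Fin n), S.Nonempty → (S.card : ℝ) < (n : ℝ) / b →
        (3 / 4 : ℝ) * (1 - 1 / b) ^ (k / 2) ≤
          ((Finset.univ.filter (fun pp : Equiv.Perm (Fin n) =>
              ∀ j < k / 2, ∀ m : Fin n, (m : ℕ) = (i + j) % n → pp m ∉ S)).card : ℝ) /
            (Nat.factorial n : ℝ) :=
  stmt19_general k b hb
end
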